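/- arXiv:math-ph/0610056 — 3 statements merged into one kernel-verified Lean document; each statement's English description precedes it below -/
import Mathlib

section
/- The image ℤ[ζ₅]⋆ = {z⋆ : z ∈ ℤ[ζ₅]} is dense in ℝ² × (ℤ/5ℤ). -/
open scoped Pointwise

noncomputable section

instance : TopologicalSpace (ZMod 5) := ⊥
instance : DiscreteTopology (ZMod 5) := ⟨rfl⟩

/-- The primitive 5th root of unity ζ₅ = exp(2πi/5). -/
def zeta5 : ℂ := Complex.exp (2 * Real.pi * Complex.I / 5)

/-- The ring of cyclotomic integers ℤ[ζ₅], as the set of ℤ-combinations of 1, ζ₅, ζ₅², ζ₅³. -/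
def Zzeta5 : Set ℂ := {z | ∃ a : Fin 4 → ℤ, z = ∑ j : Fin 4, (a j : ℂ) * zeta5 ^ (j : ℕ)}

/-- The (unique) integer coefficients of an element of ℤ[ζ₅] w.r.t. the basis 1, ζ₅, ζ₅², ζ₅³. -/
def coeffs (z : ℂ) : Fin 4 → ℤ :=
  open Classical in
  if h : z ∈ Zzeta5 then h.choose else 0

/-- The star map z ↦ (σ₂(z), Σ aⱼ(z) mod 5), with σ₂ the Galois automorphism ζ₅ ↦ ζ₅². -/
def starMap (z : ℂ) : ℂ × ZMod 5 :=
  (∑ j : Fin 4, (coeffs z j : ℂ) * zeta5 ^ (2 * (j : ℕ)),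
   ∑ j : Fin 4, ((coeffs z j : ℤ) : ZMod 5))

/-- The regular pentagon P: the convex hull of the 5th roots of unity. -/
def pent : Set ℂ := convexHull ℝ {z : ℂ | z ^ 5 = 1}

/-- The golden ratio τ = (1+√5)/2. -/
def tauR : ℝ := (1 + Real.sqrt 5) / 2

/-- The Penrose window W_P ⊂ ℝ² × ℤ/5ℤ. -/
def WP : Set (ℂ × ZMod 5) :=
  (pent ×ˢ ({1} : Set (ZMod 5))) ∪ ((-pent) ×ˢ ({2} : Set (ZMod 5))) ∪
    ((tauR • pent) ×ˢ ({3} : Set (ZMod 5))) ∪ ((-(tauR • pent)) ×ˢ ({4} : Set (ZMod 5)))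

/-- The shifted window W_P^u = (u, 0) + W_P. -/
def WPu (u : ℂ) : Set (ℂ × ZMod 5) := (fun p => ((u, (0 : ZMod 5)) + p)) '' WP

/-- The model set Λ_P^u = {z ∈ ℤ[ζ₅] : z⋆ ∈ W_P^u}. -/
def LambdaPu (u : ℂ) : Set ℂ := {z | z ∈ Zzeta5 ∧ starMap z ∈ WPu u}

/-- Λ_P^u is generic if the boundary of W_P^u contains no point of ℤ[ζ₅]⋆. -/
def IsGeneric (u : ℂ) : Prop := ∀ z ∈ Zzeta5, starMap z ∉ frontier (WPu u)

/-- A Penrose model set: a translate t + Λ_P^u of a generic Λ_P^u. -/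
def IsPMS (Λ : Set ℂ) : Prop := ∃ t u : ℂ, IsGeneric u ∧ Λ = (fun z => t + z) '' LambdaPu u

/-- v is parallel to u. -/
def Par (u v : ℂ) : Prop := ∃ r : ℝ, r ≠ 0 ∧ v = r • u

/-- A ℤ[ζ₅]-direction: a direction parallel to a nonzero element of ℤ[ζ₅]. -/
def IsZ5Direction (u : ℂ) : Prop := ∃ z ∈ Zzeta5, z ≠ 0 ∧ Par u z

/-- The line through p in direction u. -/
def line (u p : ℂ) : Set ℂ := {x | ∃ t : ℝ, x = p + t • u}

/-- The X-ray of F in direction u, as a function of the base point of the line. -/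
def Xray (u : ℂ) (F : Set ℂ) : ℂ → ℕ := fun p => (F ∩ line u p).ncard

/-- A convex subset C of Λ: a finite subset with C = conv(C) ∩ Λ. -/
def IsConvexSubset (Λ C : Set ℂ) : Prop :=
  C.Finite ∧ C ⊆ Λ ∧ C = convexHull ℝ C ∩ Λ

/-! The image is the additive subgroup of `ℂ × ℤ/5ℤ` spanned by `(ζ₅ʲ)⋆ = (ζ₅²ʲ, 1)`. It contains
`1⋆ = (1, 1)`, so it is dense as soon as its fibre over `0` is dense in `ℂ`. Since
`1 + 2(ζ₅ + ζ₅⁴) = √5`, that fibre contains `√5 = σ₂(1 + 2ζ₅² + 2ζ₅³)` and `√5 ζ₅`, as well as `5`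
and `5ζ₅`. As `√5 / 5` is irrational, `√5` and `5` generate a dense subgroup of `ℝ`, and
`ℝ + ℝζ₅ = ℂ`. -/

open Complex in
lemma zeta5_eq_exp : zeta5 = exp (((2 * Real.pi / 5 : ℝ) : ℂ) * I) := by
  rw [zeta5]
  push_cast
  ring_nf

lemma zeta5_isPrimitiveRoot : IsPrimitiveRoot zeta5 5 :=
  Complex.isPrimitiveRoot_exp 5 (by norm_num)

lemma zeta5_pow_five : zeta5 ^ 5 = 1 := zeta5_isPrimitiveRoot.pow_eq_one

lemma zeta5_im_pos : 0 < zeta5.im := by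
  rw [zeta5_eq_exp, Complex.exp_ofReal_mul_I_im]
  exact Real.sin_pos_of_pos_of_lt_pi (by positivity) (by linarith [Real.pi_pos])

open Complex in
lemma one_add_two_mul_zeta5_add_pow_four : 1 + 2 * (zeta5 + zeta5 ^ 4) = (√5 : ℝ) := by
  have hinv : zeta5 ^ 4 = exp (-((2 * Real.pi / 5 : ℝ) : ℂ) * I) := by
    rw [neg_mul, exp_neg, ← zeta5_eq_exp]
    exact eq_inv_of_mul_eq_one_left (by rw [← pow_succ, zeta5_pow_five])
  have hcos : Real.cos (2 * Real.pi / 5) = (√5 - 1) / 4 := by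
    rw [show 2 * Real.pi / 5 = 2 * (Real.pi / 5) by ring, Real.cos_two_mul, Real.cos_pi_div_five]
    nlinarith [Real.sq_sqrt (show (0:ℝ) ≤ 5 by norm_num)]
  rw [hinv, zeta5_eq_exp, ← two_cos, ← ofReal_cos, hcos]
  push_cast
  ring

lemma irrational_sqrt_five_div_five : Irrational (√5 / 5) := by
  have h : Irrational (√(5 : ℕ)) := Nat.prime_five.irrational_sqrt
  push_cast at h
  simpa [div_eq_inv_mul] using h.ratCast_mul (q := 1 / 5) (by norm_num)

lemma AddSubgroup.dense_of_dense_comap_inl {E F : Type*} [AddGroup E] [TopologicalSpace E]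
    [ContinuousAdd E] [AddGroup F] [TopologicalSpace F] (H : AddSubgroup (E × F))
    (hdense : Dense (H.comap (AddMonoidHom.inl E F) : Set E))
    (hsnd : ∀ k : F, ∃ e : E, (e, k) ∈ H) : Dense (H : Set (E × F)) := by
  intro p
  obtain ⟨e, he⟩ := hsnd p.2
  have hmaps : Set.MapsTo (fun x => (x + e, p.2)) (H.comap (AddMonoidHom.inl E F)) H :=
    fun x hx => by simpa using H.add_mem hx he
  simpa using map_mem_closure (by fun_prop) (hdense (p.1 - e)) hmaps

lemma Complex.dense_addSubgroup_of_real_mul {A : AddSubgroup ℂ} {S : Set ℝ}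
    (hS : Dense (AddSubgroup.closure S : Set ℝ)) {w : ℂ} (hw : w.im ≠ 0)
    (hre : ∀ r ∈ S, (r : ℂ) ∈ A) (hmul : ∀ r ∈ S, (r : ℂ) * w ∈ A) : Dense (A : Set ℂ) := by
  set f : ℝ × ℝ → ℂ := fun p => p.1 + p.2 * w
  have hsurj : Function.Surjective f := fun z => by
    refine ⟨(z.re - z.im / w.im * w.re, z.im / w.im), Complex.ext ?_ ?_⟩
    · simp [f]
    · simp [f, div_mul_cancel₀ _ hw]
  have hmaps : Set.MapsTo f (AddSubgroup.closure S ×ˢ AddSubgroup.closure S) A := by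
    rintro ⟨x, y⟩ ⟨hx, hy⟩
    refine A.add_mem ?_ ?_
    · exact (AddSubgroup.closure_le (A.comap Complex.ofRealHom.toAddMonoidHom)).2 hre hx
    · exact (AddSubgroup.closure_le (A.comap ((AddMonoidHom.mulRight w).comp
        Complex.ofRealHom.toAddMonoidHom))).2 hmul hy
  exact ((hsurj.denseRange.dense_image (by fun_prop) (hS.prod hS)).mono hmaps.image_subset)

lemma linearIndependent_zeta5_pow : LinearIndependent ℤ fun j : Fin 4 => zeta5 ^ (j : ℕ) := by
  have h := linearIndependent_pow (K := ℚ) zeta5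
  rw [← Polynomial.cyclotomic_eq_minpoly_rat zeta5_isPrimitiveRoot (by norm_num),
    Polynomial.natDegree_cyclotomic, Nat.totient_prime Nat.prime_five] at h
  exact h.restrict_scalars' ℤ

lemma coeffs_sum (a : Fin 4 → ℤ) : coeffs (∑ j, (a j : ℂ) * zeta5 ^ (j : ℕ)) = a := by
  have hmem : ∑ j, (a j : ℂ) * zeta5 ^ (j : ℕ) ∈ Zzeta5 := ⟨a, rfl⟩
  rw [coeffs, dif_pos hmem]
  funext j
  refine Fintype.linearIndependent_iffₛ.1 linearIndependent_zeta5_pow _ _ ?_ j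
  simpa [zsmul_eq_mul] using hmem.choose_spec.symm

def zeta5PowStar (j : Fin 4) : ℂ × ZMod 5 := (zeta5 ^ (2 * (j : ℕ)), 1)

lemma starMap_eq_linearCombination (z : ℂ) :
    starMap z = Fintype.linearCombination ℤ zeta5PowStar (coeffs z) := by
  ext <;> simp [starMap, zeta5PowStar, Fintype.linearCombination_apply, Prod.fst_sum, Prod.snd_sum]

lemma starMap_image_Zzeta5 :
    starMap '' Zzeta5 = Set.range (Fintype.linearCombination ℤ zeta5PowStar) := by
  ext p
  constructor
  · rintro ⟨z, -, rfl⟩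
    exact ⟨coeffs z, (starMap_eq_linearCombination z).symm⟩
  · rintro ⟨a, rfl⟩
    exact ⟨_, ⟨a, rfl⟩, by rw [starMap_eq_linearCombination, coeffs_sum]⟩

lemma linearCombination_zeta5PowStar_apply (a : Fin 4 → ℤ) :
    Fintype.linearCombination ℤ zeta5PowStar a =
      (a 0 + a 1 * zeta5 ^ 2 + a 2 * zeta5 ^ 4 + a 3 * zeta5,
        ((a 0 + a 1 + a 2 + a 3 : ℤ) : ZMod 5)) := by
  have h6 : zeta5 ^ 6 = zeta5 := by rw [pow_succ, zeta5_pow_five, one_mul]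
  ext <;> simp [Fintype.linearCombination_apply, Fin.sum_univ_four, zeta5PowStar, h6]

lemma mem_range_linearCombination_zeta5PowStar {x : ℂ} (a₀ a₁ a₂ a₃ : ℤ)
    (hx : a₀ + a₁ * zeta5 ^ 2 + a₂ * zeta5 ^ 4 + a₃ * zeta5 = x) (h5 : (5 : ℤ) ∣ a₀ + a₁ + a₂ + a₃) :
    (x, (0 : ZMod 5)) ∈ Set.range (Fintype.linearCombination ℤ zeta5PowStar) :=
  ⟨![a₀, a₁, a₂, a₃], by
    rw [linearCombination_zeta5PowStar_apply]
    simp [hx, (ZMod.intCast_zmod_eq_zero_iff_dvd _ 5).2 h5]⟩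

theorem starImage_dense : Dense (starMap '' Zzeta5) := by
  set H := (LinearMap.range (Fintype.linearCombination ℤ zeta5PowStar)).toAddSubgroup
  rw [starMap_image_Zzeta5]
  refine H.dense_of_dense_comap_inl ?_ fun k => ⟨(k.val : ℤ), ![(k.val : ℤ), 0, 0, 0], ?_⟩
  · have hsqrt5 := one_add_two_mul_zeta5_add_pow_four
    refine Complex.dense_addSubgroup_of_real_mul
      (dense_addSubgroupClosure_pair_iff.2 irrational_sqrt_five_div_five) zeta5_im_pos.ne' ?_ ?_
    · rintro r (rfl | rfl)
      · exact mem_range_linearCombination_zeta5PowStar 1 0 2 2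
          (by linear_combination hsqrt5) (by decide)
      · exact mem_range_linearCombination_zeta5PowStar 5 0 0 0 (by push_cast; ring) (by decide)
    · rintro r (rfl | rfl)
      · exact mem_range_linearCombination_zeta5PowStar 2 2 0 1
          (by linear_combination zeta5 * hsqrt5 - 2 * zeta5_pow_five) (by decide)
      · exact mem_range_linearCombination_zeta5PowStar 0 0 0 5 (by push_cast; ring) (by decide)
  · simp [linearCombination_zeta5PowStar_apply]

end
end

section
/- Let Λ_P be a Penrose model set and k ∈ ℕ. Then the class 𝓕_{≤k}(Λ_P) of all finite subsets of Λ_P of cardinality at most k is determined by the X-rays in the directions of any set of k+1 pairwise non-parallel ℤ[ζ₅]-directions: for any such set U ⊂ S¹ and all F, F' ⊂ Λ_P with card(F) ≤ k and card(F') ≤ k, if X_uF = X_uF' for all u ∈ U, then F = F'. -/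
open scoped Pointwise

noncomputable section

lemma par_of_mem_lines {u v p q : ℂ} (hq : q ≠ p)
    (hu : q ∈ line u p) (hv : q ∈ line v p) : Par u v := by
  obtain ⟨t, ht⟩ := hu
  obtain ⟨s, hs⟩ := hv
  have ht0 : t ≠ 0 := by rintro rfl; simp at ht; exact hq ht
  have hs0 : s ≠ 0 := by rintro rfl; simp at hs; exact hq hs
  have h1 : t • u = s • v := add_left_cancel (ht.symm.trans hs)
  refine ⟨t / s, div_ne_zero ht0 hs0, ?_⟩
  calc v = s⁻¹ • (s • v) := by rw [smul_smul, inv_mul_cancel₀ hs0, one_smul]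
    _ = s⁻¹ • (t • u) := by rw [h1]
    _ = (t / s) • u := by rw [smul_smul, div_eq_inv_mul]

lemma subset_of_xrays {k : ℕ} {U : Finset ℂ}
    (hcard : U.card = k + 1)
    (hUpar : (U : Set ℂ).Pairwise fun u v => ¬ Par u v)
    {G G' : Set ℂ} (hGfin : G.Finite) (hG'fin : G'.Finite) (hG'k : G'.ncard ≤ k)
    (hX : ∀ u ∈ U, Xray u G = Xray u G') : G ⊆ G' := by
  classical
  intro p hp
  by_contra hp'
  have hex : ∀ u ∈ U, ∃ q, q ∈ G' ∩ line u p := by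
    intro u hu
    have hpos : 0 < (G ∩ line u p).ncard := by
      rw [Set.ncard_pos (hGfin.subset Set.inter_subset_left)]
      exact ⟨p, hp, 0, by simp⟩
    have heq : (G ∩ line u p).ncard = (G' ∩ line u p).ncard :=
      congrFun (hX u hu) p
    rw [heq] at hpos
    exact Set.nonempty_of_ncard_ne_zero hpos.ne'
  choose f hf using hex
  have hmem : ∀ u ∈ U, (fun u => if h : u ∈ U then f u h else 0) u ∈ hG'fin.toFinset := by
    intro u hu
    simp only [dif_pos hu, Set.Finite.mem_toFinset]
    exact (hf u hu).1
  have hinj : Set.InjOn (fun u => if h : u ∈ U then f u h else 0) U := by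
    intro u hu v hv heq
    simp only [Finset.mem_coe] at hu hv
    simp only [dif_pos hu, dif_pos hv] at heq
    by_contra hne
    refine hUpar hu hv hne ?_
    have hqp : f u hu ≠ p := fun h => hp' (h ▸ (hf u hu).1)
    exact par_of_mem_lines hqp (hf u hu).2 (heq ▸ (hf v hv).2)
  have hle : U.card ≤ hG'fin.toFinset.card :=
    Finset.card_le_card_of_injOn _ hmem hinj
  have hc : hG'fin.toFinset.card = G'.ncard := (Set.ncard_eq_toFinset_card G' hG'fin).symm
  omega

theorem bounded_card_determined_by_succ_xrays (Λ : Set ℂ) (hΛ : IsPMS Λ) (k : ℕ)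
    (U : Finset ℂ) (hcard : U.card = k + 1)
    (hUdir : ∀ u ∈ U, ‖u‖ = 1 ∧ IsZ5Direction u)
    (hUpar : (U : Set ℂ).Pairwise fun u v => ¬ Par u v)
    (F F' : Set ℂ) (hF : F ⊆ Λ) (hFfin : F.Finite) (hFk : F.ncard ≤ k)
    (hF' : F' ⊆ Λ) (hF'fin : F'.Finite) (hF'k : F'.ncard ≤ k)
    (hX : ∀ u ∈ U, Xray u F = Xray u F') : F = F' :=
  Set.Subset.antisymm
    (subset_of_xrays hcard hUpar hFfin hF'fin hF'k hX)
    (subset_of_xrays hcard hUpar hF'fin hFfin hFk (fun u hu => (hX u hu).symm))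

end
end

section
/- The union over all Penrose model sets Λ_P of the classes 𝓕(Λ_P) of finite subsets of Λ_P is successively determined by three X-rays in ℤ[ζ₅]-directions: there exist a ℤ[ζ₅]-direction u₁ ∈ S¹, a map f₂ assigning to each X-ray function X_{u₁}F a ℤ[ζ₅]-direction u₂ not parallel to u₁, and a map f₃ assigning to each pair of X-ray functions (X_{u₁}F, X_{u₂}F) a ℤ[ζ₅]-direction u₃ not parallel to u₁ or u₂, such that for every finite set F contained in some PMS, with u₂ = f₂(X_{u₁}F) and u₃ = f₃(X_{u₁}F, X_{u₂}F), every finite set F' contained in some PMS with X_{u_j}F' = X_{u_j}F for j = 1, 2, 3 satisfies F' = F. -/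
open scoped Pointwise

noncomputable section

/-! The X-rays in two non-parallel directions confine a finite set `F` to the finite grid of
points lying on a line of positive X-ray in each direction. The grid is known from these two
X-rays alone, so a third ℤ[ζ₅]-direction can be chosen that is parallel to no difference of grid
points; such a direction is available since `n + ζ₅`, `n ∈ ℕ`, are pairwise non-parallel. Every
line in the third direction then meets the grid in at most one point, so the third X-ray reads
off which grid points belong to `F`. -/

lemma Par.refl (u : ℂ) : Par u u := ⟨1, one_ne_zero, (one_smul ℝ u).symm⟩

lemma Par.symm {u v : ℂ} (h : Par u v) : Par v u := by
  obtain ⟨r, hr, rfl⟩ := h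
  exact ⟨r⁻¹, inv_ne_zero hr, (inv_smul_smul₀ hr u).symm⟩

lemma Par.trans {u v w : ℂ} (h₁ : Par u v) (h₂ : Par v w) : Par u w := by
  obtain ⟨r, hr, rfl⟩ := h₁
  obtain ⟨s, hs, rfl⟩ := h₂
  exact ⟨s * r, mul_ne_zero hs hr, smul_smul s r u⟩

lemma par_smul_right {c : ℝ} (hc : c ≠ 0) (u : ℂ) : Par u (c • u) := ⟨c, hc, rfl⟩

lemma not_par_of_im {u v : ℂ} (hu : u.im = 0) (hv : v.im ≠ 0) : ¬ Par u v := by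
  rintro ⟨r, -, rfl⟩
  simp [hu] at hv

lemma zeta5_im_ne_zero : zeta5.im ≠ 0 := by
  have h : zeta5 = Complex.exp ((2 * Real.pi / 5 : ℝ) * Complex.I) := by
    unfold zeta5; congr 1; push_cast; ring
  rw [h, Complex.exp_ofReal_mul_I_im]
  exact (Real.sin_pos_of_pos_of_lt_pi (by positivity) (by linarith [Real.pi_pos])).ne'

lemma norm_zeta5 : ‖zeta5‖ = 1 := by
  rw [zeta5, Complex.norm_exp]
  simp

lemma natCast_add_zeta5_mem (n : ℕ) : (n : ℂ) + zeta5 ∈ Zzeta5 :=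
  ⟨![(n : ℤ), 1, 0, 0], by simp [Fin.sum_univ_four]⟩

lemma natCast_add_zeta5_ne_zero (n : ℕ) : (n : ℂ) + zeta5 ≠ 0 := by
  intro h
  exact zeta5_im_ne_zero (by simpa using congrArg Complex.im h)

lemma isZ5Direction_of_mem {z : ℂ} (hz : z ∈ Zzeta5) (hz₀ : z ≠ 0) : IsZ5Direction z :=
  ⟨z, hz, hz₀, Par.refl z⟩

lemma isZ5Direction_one : IsZ5Direction 1 :=
  isZ5Direction_of_mem ⟨![1, 0, 0, 0], by simp [Fin.sum_univ_four]⟩ one_ne_zero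

lemma isZ5Direction_zeta5 : IsZ5Direction zeta5 :=
  isZ5Direction_of_mem ⟨![0, 1, 0, 0], by simp [Fin.sum_univ_four]⟩
    fun h => zeta5_im_ne_zero (by simp [h])

lemma eq_of_par_natCast_add_zeta5 {m n : ℕ} (h : Par ((m : ℂ) + zeta5) ((n : ℂ) + zeta5)) :
    m = n := by
  obtain ⟨r, -, hr⟩ := h
  have him := congrArg Complex.im hr
  have hre := congrArg Complex.re hr
  simp only [Complex.add_im, Complex.natCast_im, zero_add, Complex.smul_im,
    Complex.add_re, Complex.natCast_re, Complex.smul_re, smul_eq_mul] at him hre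
  have hr₁ : r = 1 := by
    have : (r - 1) * zeta5.im = 0 := by linear_combination -him
    simpa [sub_eq_zero, zeta5_im_ne_zero] using this
  subst hr₁
  exact_mod_cast (by linarith : (m : ℝ) = n)

lemma exists_unit_isZ5Direction_forall_not_par {S : Set ℂ} (hS : S.Finite) :
    ∃ u : ℂ, ‖u‖ = 1 ∧ IsZ5Direction u ∧ ∀ w ∈ S, ¬ Par u w := by
  set z : ℕ → ℂ := fun n => (n : ℂ) + zeta5
  have hbad : {n | ∃ w ∈ S, Par (z n) w}.Finite := by
    refine (hS.biUnion fun w _ => Set.Subsingleton.finite (s := {n | Par (z n) w}) ?_).subset ?_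
    · exact fun m hm n hn => eq_of_par_natCast_add_zeta5 (hm.trans hn.symm)
    · rintro n ⟨w, hw, h⟩
      exact Set.mem_biUnion hw h
  obtain ⟨n, hn⟩ := hbad.infinite_compl.nonempty
  simp only [Set.mem_compl_iff, Set.mem_ofPred_eq, not_exists, not_and] at hn
  have hz₀ := natCast_add_zeta5_ne_zero n
  have hzu : Par (z n) ((‖z n‖⁻¹ : ℝ) • z n) := par_smul_right (by simpa using hz₀) _
  refine ⟨(‖z n‖⁻¹ : ℝ) • z n, norm_smul_inv_norm hz₀, ?_, fun w hw h => hn w hw (hzu.trans h)⟩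
  exact ⟨z n, natCast_add_zeta5_mem n, hz₀, hzu.symm⟩

lemma mem_line_self (u p : ℂ) : p ∈ line u p := ⟨0, by simp⟩

lemma mem_line_comm {u p x : ℂ} (h : x ∈ line u p) : p ∈ line u x := by
  obtain ⟨t, rfl⟩ := h
  exact ⟨-t, by rw [neg_smul, add_neg_cancel_right]⟩

lemma xray_ne_zero_iff {F : Set ℂ} (hF : F.Finite) (u p : ℂ) :
    Xray u F p ≠ 0 ↔ ∃ x ∈ F, x ∈ line u p := by
  rw [Xray, Ne, Set.ncard_eq_zero (hF.inter_of_left _), ← Ne, ← Set.nonempty_iff_ne_empty]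
  rfl

lemma xray_ne_zero_of_mem {F : Set ℂ} (hF : F.Finite) (u : ℂ) {p : ℂ} (hp : p ∈ F) :
    Xray u F p ≠ 0 :=
  (xray_ne_zero_iff hF u p).2 ⟨p, hp, mem_line_self u p⟩

lemma line_inter_line_subsingleton {u v : ℂ} (hu : u ≠ 0) (huv : ¬ Par u v) (x y : ℂ) :
    (line u x ∩ line v y).Subsingleton := by
  rintro p ⟨⟨a, rfl⟩, ⟨b, hb⟩⟩ q ⟨⟨c, rfl⟩, ⟨d, hd⟩⟩
  have key : (a - c) • u = (b - d) • v := by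
    rw [sub_smul, sub_smul]
    linear_combination hb - hd
  obtain rfl | hac := eq_or_ne a c
  · rfl
  have hbd : b - d ≠ 0 := by
    rintro hbd
    rw [hbd, zero_smul] at key
    exact hu ((smul_eq_zero.1 key).resolve_left (sub_ne_zero.2 hac))
  exact absurd ⟨(b - d)⁻¹ * (a - c), mul_ne_zero (inv_ne_zero hbd) (sub_ne_zero.2 hac),
    by rw [mul_smul, key, inv_smul_smul₀ hbd]⟩ huv

def xrayGrid (X Y : ℂ → ℕ) : Set ℂ := {p | X p ≠ 0 ∧ Y p ≠ 0}

lemma subset_xrayGrid {F : Set ℂ} (hF : F.Finite) (u v : ℂ) :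
    F ⊆ xrayGrid (Xray u F) (Xray v F) :=
  fun _ hp => ⟨xray_ne_zero_of_mem hF u hp, xray_ne_zero_of_mem hF v hp⟩

lemma finite_xrayGrid {F : Set ℂ} (hF : F.Finite) {u v : ℂ} (hu : u ≠ 0) (huv : ¬ Par u v) :
    (xrayGrid (Xray u F) (Xray v F)).Finite := by
  refine (hF.biUnion fun x _ => hF.biUnion fun y _ =>
    (line_inter_line_subsingleton hu huv x y).finite).subset ?_
  rintro p ⟨hpu, hpv⟩
  obtain ⟨x, hx, hxp⟩ := (xray_ne_zero_iff hF u p).1 hpu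
  obtain ⟨y, hy, hyp⟩ := (xray_ne_zero_iff hF v p).1 hpv
  exact Set.mem_biUnion hx (Set.mem_biUnion hy ⟨mem_line_comm hxp, mem_line_comm hyp⟩)

lemma inter_line_subsingleton_of_forall_not_par {E : Set ℂ} {u : ℂ}
    (hu : ∀ w ∈ E - E, ¬ Par u w) (p : ℂ) : (E ∩ line u p).Subsingleton := by
  rintro x ⟨hx, s, rfl⟩ y ⟨hy, t, rfl⟩
  by_contra hne
  have hst : t - s ≠ 0 := sub_ne_zero.2 fun h => hne (by rw [h])
  exact hu _ (Set.sub_mem_sub hy hx) ⟨t - s, hst, by rw [sub_smul]; abel⟩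

lemma mem_iff_xray_ne_zero {E G : Set ℂ} {u : ℂ} (hE : ∀ p, (E ∩ line u p).Subsingleton)
    (hG : G.Finite) (hGE : G ⊆ E) {p : ℂ} (hp : p ∈ E) : p ∈ G ↔ Xray u G p ≠ 0 := by
  refine ⟨xray_ne_zero_of_mem hG u, fun h => ?_⟩
  obtain ⟨x, hx, hxp⟩ := (xray_ne_zero_iff hG u p).1 h
  rwa [hE p ⟨hGE hx, hxp⟩ ⟨hp, mem_line_self u p⟩] at hx

lemma eq_of_xray_eq {E F F' : Set ℂ} {u : ℂ} (hE : ∀ p, (E ∩ line u p).Subsingleton)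
    (hF : F.Finite) (hFE : F ⊆ E) (hF' : F'.Finite) (hF'E : F' ⊆ E)
    (h : Xray u F' = Xray u F) : F' = F := by
  ext p
  constructor
  · exact fun hp => (mem_iff_xray_ne_zero hE hF hFE (hF'E hp)).2
      (h ▸ (mem_iff_xray_ne_zero hE hF' hF'E (hF'E hp)).1 hp)
  · exact fun hp => (mem_iff_xray_ne_zero hE hF' hF'E (hFE hp)).2
      (h.symm ▸ (mem_iff_xray_ne_zero hE hF hFE (hFE hp)).1 hp)

theorem union_successively_determined_by_three_xrays :
    ∃ u₁ : ℂ, ‖u₁‖ = 1 ∧ IsZ5Direction u₁ ∧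
      ∃ f₂ : (ℂ → ℕ) → ℂ, ∃ f₃ : (ℂ → ℕ) × (ℂ → ℕ) → ℂ,
        ∀ F : Set ℂ, (∃ Λ : Set ℂ, IsPMS Λ ∧ F ⊆ Λ) → F.Finite →
          let u₂ := f₂ (Xray u₁ F)
          let u₃ := f₃ (Xray u₁ F, Xray u₂ F)
          ‖u₂‖ = 1 ∧ IsZ5Direction u₂ ∧ ¬ Par u₁ u₂ ∧
          ‖u₃‖ = 1 ∧ IsZ5Direction u₃ ∧ ¬ Par u₁ u₃ ∧ ¬ Par u₂ u₃ ∧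
          ∀ F' : Set ℂ, (∃ Λ' : Set ℂ, IsPMS Λ' ∧ F' ⊆ Λ') → F'.Finite →
            Xray u₁ F' = Xray u₁ F → Xray u₂ F' = Xray u₂ F → Xray u₃ F' = Xray u₃ F →
            F' = F := by
  have hdir (E : Set ℂ) : ∃ u : ℂ, E.Finite →
      ‖u‖ = 1 ∧ IsZ5Direction u ∧ ∀ w ∈ insert 1 (insert zeta5 (E - E)), ¬ Par u w := by
    by_cases hE : E.Finite
    · obtain ⟨u, hu⟩ := exists_unit_isZ5Direction_forall_not_par
        (((hE.image2 (· - ·) hE).insert zeta5).insert 1)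
      exact ⟨u, fun _ => hu⟩
    · exact ⟨0, fun h => absurd h hE⟩
  choose dir hdir using hdir
  have h1ζ : ¬ Par 1 zeta5 := not_par_of_im rfl zeta5_im_ne_zero
  refine ⟨1, norm_one, isZ5Direction_one, fun _ => zeta5, fun X => dir (xrayGrid X.1 X.2),
    fun F _ hF => ?_⟩
  set E := xrayGrid (Xray 1 F) (Xray zeta5 F)
  obtain ⟨hnorm, hZ5, hnot⟩ := hdir E (finite_xrayGrid hF one_ne_zero h1ζ)
  refine ⟨norm_zeta5, isZ5Direction_zeta5, h1ζ, hnorm, hZ5,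
    fun h => hnot 1 (Set.mem_insert _ _) h.symm,
    fun h => hnot zeta5 (Set.mem_insert_of_mem _ (Set.mem_insert _ _)) h.symm,
    fun F' _ hF' h₁ h₂ h₃ => ?_⟩
  have hE : ∀ p, (E ∩ line (dir E) p).Subsingleton := inter_line_subsingleton_of_forall_not_par
    fun w hw => hnot w (Set.mem_insert_of_mem _ (Set.mem_insert_of_mem _ hw))
  exact eq_of_xray_eq hE hF (subset_xrayGrid hF 1 zeta5) hF'
    (h₁ ▸ h₂ ▸ subset_xrayGrid hF' 1 zeta5 : F' ⊆ xrayGrid (Xray 1 F) (Xray zeta5 F)) h₃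
end
end
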